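/- Let H ∈ (1/2, 3/4), let Σ > 0 and let σ : [0,1] → ℝ be measurable with 0 ≤ σ(t) ≤ Σ. Let (G_t)_{t∈[0,1]} be a centered Gaussian process on a probability space (Ω, F, P) with covariance E[G_s G_t] = H(2H−1) ∫_0^s ∫_0^t σ(u) σ(v) |u − v|^{2H−2} du dv. For N ≥ 1 and 0 ≤ k ≤ N−1 set η_k = G_{(k+1)/N} − G_{k/N} and δ_k = E[G_{(k+1)/N}²] − E[G_{k/N}²]. Then the random variable G_N = N^{2H−1/2} Σ_{k=0}^{N−1} η_k δ_k converges to 0 in L²(P) as N → ∞, i.e. E[G_N²] → 0. -/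

import Mathlib

/-!
Write `K(u, v) = σ(u) σ(v) |u - v|^(2H-2)`, `R(s, t) = ∫₀ˢ ∫₀ᵗ K` and `c = H(2H - 1)`, so that
`E[G_s G_t] = c R(s, t)`. Since `2H - 2 > -1`, every row integral `∫₀¹ K(u, v) dv` is at most
`B = 2Λ² / (2H - 1)`. By bilinearity `E[η_k η_j] = c ∫_{I_k} ∫_{I_j} K ≥ 0`, and
`δ_k = c (∫_{I_k} ∫₀^{t_{k+1}} K + ∫_{I_k} ∫₀^{t_k} K) ∈ [0, 2cB/N]`. As all the covariances are
nonnegative, `E[(∑ δ_k η_k)²] = ∑ δ_k δ_j E[η_k η_j] ≤ (2cB/N)² E[(∑ η_k)²] = (2cB/N)² E[(G₁ - G₀)²]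
≤ (2cB/N)² cB`, hence `E[G_N²] = O(N^(4H-3))`, which tends to `0` because `H < 3/4`.
-/

open MeasureTheory ProbabilityTheory Filter Topology NNReal Real Set
open scoped ENNReal

section

open intervalIntegral

structure RowBoundedKernel (K : ℝ → ℝ → ℝ) (B : ℝ) : Prop where
  measurable : Measurable (Function.uncurry K)
  nonneg : ∀ u ∈ Icc (0:ℝ) 1, ∀ v ∈ Icc (0:ℝ) 1, 0 ≤ K u v
  intervalIntegrable : ∀ u ∈ Icc (0:ℝ) 1, IntervalIntegrable (K u) volume 0 1
  integral_le : ∀ u ∈ Icc (0:ℝ) 1, ∫ v in (0:ℝ)..1, K u v ≤ B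

noncomputable def cornerIntegral (K : ℝ → ℝ → ℝ) (s t : ℝ) : ℝ :=
  ∫ u in (0:ℝ)..s, ∫ v in (0:ℝ)..t, K u v

def rectIncrement (F : ℝ → ℝ → ℝ) (s s' t t' : ℝ) : ℝ := F s' t' - F s' t - F s t' + F s t

@[simp]
theorem cornerIntegral_zero_right (K : ℝ → ℝ → ℝ) (s : ℝ) : cornerIntegral K s 0 = 0 := by
  simp [cornerIntegral]

namespace RowBoundedKernel

variable {K : ℝ → ℝ → ℝ} {B a b s s' t t' u : ℝ}

theorem intervalIntegrable_row (hK : RowBoundedKernel K B) (hu : u ∈ Icc (0:ℝ) 1)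
    (ha : a ∈ Icc (0:ℝ) 1) (hb : b ∈ Icc (0:ℝ) 1) : IntervalIntegrable (K u) volume a b :=
  (hK.intervalIntegrable u hu).mono_set <| by
    rw [uIcc_of_le zero_le_one]; exact uIcc_subset_Icc ha hb

theorem integral_row_nonneg (hK : RowBoundedKernel K B) (hu : u ∈ Icc (0:ℝ) 1)
    (ha : 0 ≤ a) (hab : a ≤ b) (hb : b ≤ 1) : 0 ≤ ∫ v in a..b, K u v :=
  integral_nonneg hab fun v hv => hK.nonneg u hu v ⟨ha.trans hv.1, hv.2.trans hb⟩

theorem integral_row_le (hK : RowBoundedKernel K B) (hu : u ∈ Icc (0:ℝ) 1)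
    (ha : 0 ≤ a) (hab : a ≤ b) (hb : b ≤ 1) : ∫ v in a..b, K u v ≤ B := by
  refine (integral_mono_interval ha hab hb ?_ (hK.intervalIntegrable u hu)).trans
    (hK.integral_le u hu)
  filter_upwards [ae_restrict_mem measurableSet_Ioc] with v hv
  exact hK.nonneg u hu v (Ioc_subset_Icc_self hv)

theorem stronglyMeasurable_integral_row (hK : RowBoundedKernel K B) (a b : ℝ) :
    StronglyMeasurable fun u => ∫ v in a..b, K u v :=
  (hK.measurable.stronglyMeasurable.integral_prod_right (ν := volume.restrict (Ioc a b))).sub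
    (hK.measurable.stronglyMeasurable.integral_prod_right (ν := volume.restrict (Ioc b a)))

theorem intervalIntegrable_integral_row (hK : RowBoundedKernel K B) (ha : 0 ≤ a) (hab : a ≤ b)
    (hb : b ≤ 1) (hs : s ∈ Icc (0:ℝ) 1) (hs' : s' ∈ Icc (0:ℝ) 1) :
    IntervalIntegrable (fun u => ∫ v in a..b, K u v) volume s s' := by
  refine (intervalIntegrable_const (c := B)).mono_fun'
    (hK.stronglyMeasurable_integral_row a b).aestronglyMeasurable ?_
  filter_upwards [ae_restrict_mem measurableSet_uIoc] with u hu
  have hu : u ∈ Icc (0:ℝ) 1 := uIcc_subset_Icc hs hs' (uIoc_subset_uIcc hu)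
  rw [Real.norm_eq_abs, abs_of_nonneg (hK.integral_row_nonneg hu ha hab hb)]
  exact hK.integral_row_le hu ha hab hb

theorem cornerIntegral_sub_cornerIntegral (hK : RowBoundedKernel K B) (hs : s ∈ Icc (0:ℝ) 1)
    (ht : t ∈ Icc (0:ℝ) 1) (ht' : t' ∈ Icc (0:ℝ) 1) :
    cornerIntegral K s t' - cornerIntegral K s t = ∫ u in (0:ℝ)..s, ∫ v in t..t', K u v := by
  have h0 : (0:ℝ) ∈ Icc (0:ℝ) 1 := ⟨le_rfl, zero_le_one⟩
  rw [cornerIntegral, cornerIntegral, ← integral_sub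
    (hK.intervalIntegrable_integral_row le_rfl ht'.1 ht'.2 h0 hs)
    (hK.intervalIntegrable_integral_row le_rfl ht.1 ht.2 h0 hs)]
  refine integral_congr fun u hu => ?_
  have hu : u ∈ Icc (0:ℝ) 1 := uIcc_subset_Icc h0 hs hu
  exact integral_interval_sub_left (hK.intervalIntegrable_row hu h0 ht')
    (hK.intervalIntegrable_row hu h0 ht)

theorem rectIncrement_cornerIntegral (hK : RowBoundedKernel K B) (hs : s ∈ Icc (0:ℝ) 1)
    (hs' : s' ∈ Icc (0:ℝ) 1) (ht : t ∈ Icc (0:ℝ) 1) (ht' : t' ∈ Icc (0:ℝ) 1) (htt' : t ≤ t') :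
    rectIncrement (cornerIntegral K) s s' t t' = ∫ u in s..s', ∫ v in t..t', K u v := by
  have h0 : (0:ℝ) ∈ Icc (0:ℝ) 1 := ⟨le_rfl, zero_le_one⟩
  rw [← integral_interval_sub_left (hK.intervalIntegrable_integral_row ht.1 htt' ht'.2 h0 hs')
    (hK.intervalIntegrable_integral_row ht.1 htt' ht'.2 h0 hs),
    ← hK.cornerIntegral_sub_cornerIntegral hs' ht ht',
    ← hK.cornerIntegral_sub_cornerIntegral hs ht ht', rectIncrement]
  ring

theorem rectIncrement_cornerIntegral_mem_Icc (hK : RowBoundedKernel K B) (hs : 0 ≤ s)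
    (hss' : s ≤ s') (hs' : s' ≤ 1) (ht : 0 ≤ t) (htt' : t ≤ t') (ht' : t' ≤ 1) :
    rectIncrement (cornerIntegral K) s s' t t' ∈ Icc 0 ((s' - s) * B) := by
  rw [hK.rectIncrement_cornerIntegral ⟨hs, hss'.trans hs'⟩ ⟨hs.trans hss', hs'⟩
    ⟨ht, htt'.trans ht'⟩ ⟨ht.trans htt', ht'⟩ htt']
  refine ⟨integral_nonneg hss' fun u hu =>
    hK.integral_row_nonneg ⟨hs.trans hu.1, hu.2.trans hs'⟩ ht htt' ht', ?_⟩
  calc ∫ u in s..s', ∫ v in t..t', K u v ≤ ∫ _ in s..s', B :=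
        integral_mono_on hss' (hK.intervalIntegrable_integral_row ht htt' ht'
          ⟨hs, hss'.trans hs'⟩ ⟨hs.trans hss', hs'⟩) intervalIntegrable_const
          fun u hu => hK.integral_row_le ⟨hs.trans hu.1, hu.2.trans hs'⟩ ht htt' ht'
    _ = (s' - s) * B := by rw [intervalIntegral.integral_const, smul_eq_mul]

end RowBoundedKernel

end

section AbsRpow

open intervalIntegral

variable {r c u : ℝ}

theorem intervalIntegrable_abs_rpow (hr : -1 < r) (hc : 0 ≤ c) :
    IntervalIntegrable (fun x : ℝ => |x| ^ r) volume 0 c := by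
  refine (intervalIntegrable_congr fun x hx => ?_).mpr (intervalIntegrable_rpow' hr)
  rw [uIoc_of_le hc] at hx
  simp only [abs_of_pos hx.1]

theorem integral_abs_rpow (hr : -1 < r) (hc : 0 ≤ c) :
    ∫ x in (0:ℝ)..c, |x| ^ r = c ^ (r + 1) / (r + 1) := by
  rw [integral_congr (g := fun x => x ^ r) fun x hx => ?_, integral_rpow (Or.inl hr),
    Real.zero_rpow (by linarith), sub_zero]
  rw [uIcc_of_le hc] at hx
  simp only [abs_of_nonneg hx.1]

theorem intervalIntegrable_abs_sub_rpow (hr : -1 < r) (hu : u ∈ Icc (0:ℝ) 1) :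
    IntervalIntegrable (fun v => |u - v| ^ r) volume 0 1 := by
  have left := (intervalIntegrable_abs_rpow hr hu.1).comp_sub_left u
  have right := (intervalIntegrable_abs_rpow hr (sub_nonneg.2 hu.2)).comp_sub_right u
  simp only [sub_zero, sub_self, zero_add, sub_add_cancel] at left right
  simp_rw [abs_sub_comm _ u] at right
  exact left.symm.trans right

theorem integral_abs_sub_rpow (hr : -1 < r) (hu : u ∈ Icc (0:ℝ) 1) :
    ∫ v in (0:ℝ)..1, |u - v| ^ r = (u ^ (r + 1) + (1 - u) ^ (r + 1)) / (r + 1) := by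
  have hI := intervalIntegrable_abs_sub_rpow hr hu
  have hu' : u ∈ uIcc (0:ℝ) 1 := by rwa [uIcc_of_le zero_le_one]
  have left : ∫ v in (0:ℝ)..u, |u - v| ^ r = u ^ (r + 1) / (r + 1) := by
    rw [integral_comp_sub_left (fun x => |x| ^ r), sub_self, sub_zero, integral_abs_rpow hr hu.1]
  have right : ∫ v in u..1, |u - v| ^ r = (1 - u) ^ (r + 1) / (r + 1) := by
    simp_rw [abs_sub_comm u]
    rw [integral_comp_sub_right (fun x => |x| ^ r), sub_self,
      integral_abs_rpow hr (sub_nonneg.2 hu.2)]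
  rw [← integral_add_adjacent_intervals (hI.mono_set (uIcc_subset_uIcc_left hu'))
    (hI.mono_set (uIcc_subset_uIcc_right hu')),
    left, right, add_div]

theorem integral_abs_sub_rpow_le (hr : -1 < r) (hu : u ∈ Icc (0:ℝ) 1) :
    ∫ v in (0:ℝ)..1, |u - v| ^ r ≤ 2 / (r + 1) := by
  have hr1 : 0 < r + 1 := by linarith
  rw [integral_abs_sub_rpow hr hu]
  gcongr
  linarith [rpow_le_one hu.1 hu.2 hr1.le,
    rpow_le_one (sub_nonneg.2 hu.2) (by linarith [hu.1]) hr1.le]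

theorem rowBoundedKernel_mul_abs_sub_rpow {σ : ℝ → ℝ} {Λ r : ℝ} (hσ : Measurable σ)
    (hσbd : ∀ t ∈ Icc (0:ℝ) 1, 0 ≤ σ t ∧ σ t ≤ Λ) (hr : -1 < r) :
    RowBoundedKernel (fun u v => σ u * σ v * |u - v| ^ r) (Λ ^ 2 * (2 / (r + 1))) := by
  have hσσ : ∀ u ∈ Icc (0:ℝ) 1, ∀ v ∈ Icc (0:ℝ) 1, σ u * σ v ≤ Λ ^ 2 := fun u hu v hv => by
    nlinarith [hσbd u hu, hσbd v hv]
  have hle : ∀ u ∈ Icc (0:ℝ) 1, ∀ v ∈ Icc (0:ℝ) 1,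
      σ u * σ v * |u - v| ^ r ≤ Λ ^ 2 * |u - v| ^ r := fun u hu v hv =>
    mul_le_mul_of_nonneg_right (hσσ u hu v hv) (rpow_nonneg (abs_nonneg _) r)
  have hnonneg : ∀ u ∈ Icc (0:ℝ) 1, ∀ v ∈ Icc (0:ℝ) 1, 0 ≤ σ u * σ v * |u - v| ^ r :=
    fun u hu v hv =>
      mul_nonneg (mul_nonneg (hσbd u hu).1 (hσbd v hv).1) (rpow_nonneg (abs_nonneg _) r)
  have hint : ∀ u ∈ Icc (0:ℝ) 1,
      IntervalIntegrable (fun v => σ u * σ v * |u - v| ^ r) volume 0 1 := by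
    intro u hu
    refine ((intervalIntegrable_abs_sub_rpow hr hu).const_mul (Λ ^ 2)).mono_fun' (by fun_prop) ?_
    filter_upwards [ae_restrict_mem measurableSet_uIoc] with v hv
    have hv : v ∈ Icc (0:ℝ) 1 := by rw [uIoc_of_le zero_le_one] at hv; exact Ioc_subset_Icc_self hv
    rw [Real.norm_eq_abs, abs_of_nonneg (hnonneg u hu v hv)]
    exact hle u hu v hv
  refine ⟨by fun_prop, hnonneg, hint, fun u hu => ?_⟩
  calc ∫ v in (0:ℝ)..1, σ u * σ v * |u - v| ^ r ≤ ∫ v in (0:ℝ)..1, Λ ^ 2 * |u - v| ^ r :=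
        integral_mono_on zero_le_one (hint u hu)
          ((intervalIntegrable_abs_sub_rpow hr hu).const_mul _) (hle u hu)
    _ ≤ Λ ^ 2 * (2 / (r + 1)) := by
        rw [intervalIntegral.integral_const_mul]
        exact mul_le_mul_of_nonneg_left (integral_abs_sub_rpow_le hr hu) (sq_nonneg Λ)

end AbsRpow

section L2

variable {Ω ι : Type*} [MeasurableSpace Ω] {P : Measure Ω}

theorem memLp_of_map_eq_gaussianReal {X : Ω → ℝ} {μ : ℝ} {v : ℝ≥0}
    (h : P.map X = gaussianReal μ v) (p : ℝ≥0∞) (hp : p ≠ ∞) : MemLp X p P := by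
  have hX : AEMeasurable X P := .of_map_ne_zero (by rw [h]; exact IsProbabilityMeasure.ne_zero _)
  exact (memLp_map_measure_iff aestronglyMeasurable_id hX).1 (h ▸ memLp_id_gaussianReal' p hp)

theorem integral_sq_sum_mul (s : Finset ι) (a : ι → ℝ) {Y : ι → Ω → ℝ}
    (hY : ∀ i ∈ s, MemLp (Y i) 2 P) :
    ∫ ω, (∑ i ∈ s, Y i ω * a i) ^ 2 ∂P = ∑ i ∈ s, ∑ j ∈ s, a i * a j * ∫ ω, Y i ω * Y j ω ∂P := by
  have hYY : ∀ i ∈ s, ∀ j ∈ s, Integrable (fun ω => a i * a j * (Y i ω * Y j ω)) P :=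
    fun i hi j hj => ((hY i hi).integrable_mul (hY j hj)).const_mul _
  calc ∫ ω, (∑ i ∈ s, Y i ω * a i) ^ 2 ∂P
      = ∫ ω, ∑ i ∈ s, ∑ j ∈ s, a i * a j * (Y i ω * Y j ω) ∂P := by
        simp_rw [sq, Finset.sum_mul_sum]
        exact integral_congr_ae (ae_of_all _ fun ω => Finset.sum_congr rfl fun i _ =>
          Finset.sum_congr rfl fun j _ => by ring)
    _ = ∑ i ∈ s, ∑ j ∈ s, a i * a j * ∫ ω, Y i ω * Y j ω ∂P := by
        rw [integral_finsetSum s fun i hi => integrable_finsetSum s (hYY i hi)]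
        refine Finset.sum_congr rfl fun i hi => ?_
        rw [integral_finsetSum s (hYY i hi)]
        simp_rw [integral_const_mul]

theorem sum_sum_mul_mul_le {s : Finset ι} {a : ι → ℝ} {C : ι → ι → ℝ} {D : ℝ}
    (ha : ∀ i ∈ s, 0 ≤ a i ∧ a i ≤ D) (hC : ∀ i ∈ s, ∀ j ∈ s, 0 ≤ C i j) :
    ∑ i ∈ s, ∑ j ∈ s, a i * a j * C i j ≤ D ^ 2 * ∑ i ∈ s, ∑ j ∈ s, C i j := by
  simp_rw [Finset.mul_sum]
  refine Finset.sum_le_sum fun i hi => Finset.sum_le_sum fun j hj => ?_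
  have hij : a i * a j ≤ D ^ 2 :=
    sq D ▸ mul_le_mul (ha i hi).2 (ha j hj).2 (ha j hj).1 ((ha i hi).1.trans (ha i hi).2)
  exact mul_le_mul_of_nonneg_right hij (hC i hi j hj)

theorem integral_sq_sum_mul_le {s : Finset ι} {a : ι → ℝ} {Y : ι → Ω → ℝ} {D : ℝ}
    (hY : ∀ i ∈ s, MemLp (Y i) 2 P) (hYY : ∀ i ∈ s, ∀ j ∈ s, 0 ≤ ∫ ω, Y i ω * Y j ω ∂P)
    (ha : ∀ i ∈ s, 0 ≤ a i ∧ a i ≤ D) :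
    ∫ ω, (∑ i ∈ s, Y i ω * a i) ^ 2 ∂P ≤ D ^ 2 * ∫ ω, (∑ i ∈ s, Y i ω) ^ 2 ∂P := by
  have h := integral_sq_sum_mul s (fun _ => 1) hY
  simp only [mul_one, one_mul] at h
  rw [integral_sq_sum_mul s a hY, h]
  exact sum_sum_mul_mul_le ha hYY

end L2

section Covariance

variable {Ω : Type*} [MeasurableSpace Ω] {P : Measure Ω} {X : ℝ → Ω → ℝ} {K : ℝ → ℝ → ℝ}
  {B c s s' t t' : ℝ}

theorem integral_sub_mul_sub (hX : ∀ t ∈ Icc (0:ℝ) 1, MemLp (X t) 2 P)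
    (hcov : ∀ s t, s ∈ Icc (0:ℝ) 1 → t ∈ Icc (0:ℝ) 1 →
      ∫ ω, X s ω * X t ω ∂P = c * cornerIntegral K s t)
    (hs : s ∈ Icc (0:ℝ) 1) (hs' : s' ∈ Icc (0:ℝ) 1) (ht : t ∈ Icc (0:ℝ) 1)
    (ht' : t' ∈ Icc (0:ℝ) 1) :
    ∫ ω, (X s' ω - X s ω) * (X t' ω - X t ω) ∂P =
      c * rectIncrement (cornerIntegral K) s s' t t' := by
  have hI : ∀ a ∈ Icc (0:ℝ) 1, ∀ b ∈ Icc (0:ℝ) 1, Integrable (fun ω => X a ω * X b ω) P :=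
    fun a ha b hb => (hX a ha).integrable_mul (hX b hb)
  have h1 := hI _ hs' _ ht'
  have h2 := hI _ hs' _ ht
  have h3 := hI _ hs _ ht'
  have h4 := hI _ hs _ ht
  have hexpand : (fun ω => (X s' ω - X s ω) * (X t' ω - X t ω))
      = fun ω => X s' ω * X t' ω - X s' ω * X t ω - X s ω * X t' ω + X s ω * X t ω := by
    funext ω; ring
  rw [hexpand, integral_add (by fun_prop) h4, integral_sub (by fun_prop) h3, integral_sub h1 h2,
    hcov _ _ hs' ht', hcov _ _ hs' ht, hcov _ _ hs ht', hcov _ _ hs ht, rectIncrement]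
  ring

theorem integral_sub_mul_sub_mem_Icc (hK : RowBoundedKernel K B) (hc : 0 ≤ c)
    (hX : ∀ t ∈ Icc (0:ℝ) 1, MemLp (X t) 2 P)
    (hcov : ∀ s t, s ∈ Icc (0:ℝ) 1 → t ∈ Icc (0:ℝ) 1 →
      ∫ ω, X s ω * X t ω ∂P = c * cornerIntegral K s t)
    (hs : 0 ≤ s) (hss' : s ≤ s') (hs' : s' ≤ 1) (ht : 0 ≤ t) (htt' : t ≤ t') (ht' : t' ≤ 1) :
    ∫ ω, (X s' ω - X s ω) * (X t' ω - X t ω) ∂P ∈ Icc 0 (c * ((s' - s) * B)) := by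
  rw [integral_sub_mul_sub hX hcov ⟨hs, hss'.trans hs'⟩ ⟨hs.trans hss', hs'⟩
    ⟨ht, htt'.trans ht'⟩ ⟨ht.trans htt', ht'⟩]
  have h := hK.rectIncrement_cornerIntegral_mem_Icc hs hss' hs' ht htt' ht'
  exact ⟨mul_nonneg hc h.1, mul_le_mul_of_nonneg_left h.2 hc⟩

theorem integral_sq_sub_integral_sq
    (hcov : ∀ s t, s ∈ Icc (0:ℝ) 1 → t ∈ Icc (0:ℝ) 1 →
      ∫ ω, X s ω * X t ω ∂P = c * cornerIntegral K s t)
    (ht : t ∈ Icc (0:ℝ) 1) (ht' : t' ∈ Icc (0:ℝ) 1) :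
    ∫ ω, X t' ω ^ 2 ∂P - ∫ ω, X t ω ^ 2 ∂P = c * (rectIncrement (cornerIntegral K) t t' 0 t'
      + rectIncrement (cornerIntegral K) t t' 0 t) := by
  -- the corner integral is symmetric because it is a covariance
  have hsymm : c * cornerIntegral K t t' = c * cornerIntegral K t' t := by
    rw [← hcov _ _ ht ht', ← hcov _ _ ht' ht]; simp_rw [mul_comm]
  simp only [sq, rectIncrement, cornerIntegral_zero_right]
  rw [hcov _ _ ht' ht', hcov _ _ ht ht]
  linear_combination hsymm

theorem integral_sq_sub_integral_sq_mem_Icc (hK : RowBoundedKernel K B) (hc : 0 ≤ c)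
    (hcov : ∀ s t, s ∈ Icc (0:ℝ) 1 → t ∈ Icc (0:ℝ) 1 →
      ∫ ω, X s ω * X t ω ∂P = c * cornerIntegral K s t)
    (ht : 0 ≤ t) (htt' : t ≤ t') (ht' : t' ≤ 1) :
    ∫ ω, X t' ω ^ 2 ∂P - ∫ ω, X t ω ^ 2 ∂P ∈ Icc 0 (2 * c * B * (t' - t)) := by
  rw [integral_sq_sub_integral_sq hcov ⟨ht, htt'.trans ht'⟩ ⟨ht.trans htt', ht'⟩]
  have h₁ := hK.rectIncrement_cornerIntegral_mem_Icc ht htt' ht' le_rfl (ht.trans htt') ht'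
  have h₂ := hK.rectIncrement_cornerIntegral_mem_Icc ht htt' ht' le_rfl ht (htt'.trans ht')
  refine ⟨mul_nonneg hc (add_nonneg h₁.1 h₂.1), ?_⟩
  calc c * (_ + _) ≤ c * ((t' - t) * B + (t' - t) * B) := by gcongr; exacts [h₁.2, h₂.2]
    _ = 2 * c * B * (t' - t) := by ring

theorem integral_sq_sum_increment_mul_le (hK : RowBoundedKernel K B) (hc : 0 ≤ c)
    (hX : ∀ t ∈ Icc (0:ℝ) 1, MemLp (X t) 2 P)
    (hcov : ∀ s t, s ∈ Icc (0:ℝ) 1 → t ∈ Icc (0:ℝ) 1 →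
      ∫ ω, X s ω * X t ω ∂P = c * cornerIntegral K s t)
    {N : ℕ} (hN : 0 < N) :
    ∫ ω, (∑ k ∈ Finset.range N, (X (((k : ℝ) + 1) / N) ω - X ((k : ℝ) / N) ω) *
        ((∫ ω, X (((k : ℝ) + 1) / N) ω ^ 2 ∂P) - ∫ ω, X ((k : ℝ) / N) ω ^ 2 ∂P)) ^ 2 ∂P
      ≤ (2 * c * B / N) ^ 2 * (c * B) := by
  have hN' : (0:ℝ) < N := Nat.cast_pos.2 hN
  have hgrid : ∀ k : ℕ, k ≤ N → (k : ℝ) / N ∈ Icc (0:ℝ) 1 := fun k hk =>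
    ⟨by positivity, div_le_one_of_le₀ (by exact_mod_cast hk) hN'.le⟩
  have hleft : ∀ k ∈ Finset.range N, (k : ℝ) / N ∈ Icc (0:ℝ) 1 := fun k hk =>
    hgrid k (Finset.mem_range.1 hk).le
  have hright : ∀ k ∈ Finset.range N, ((k : ℝ) + 1) / N ∈ Icc (0:ℝ) 1 := fun k hk => by
    exact_mod_cast hgrid (k + 1) (Finset.mem_range.1 hk)
  have hstep : ∀ k : ℕ, (k : ℝ) / N ≤ ((k : ℝ) + 1) / N := fun k => by gcongr; linarith
  have htelescope : ∀ ω, ∑ k ∈ Finset.range N, (X (((k : ℝ) + 1) / N) ω - X ((k : ℝ) / N) ω)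
      = X 1 ω - X 0 ω := fun ω => by
    have h := Finset.sum_range_sub (fun k : ℕ => X ((k : ℝ) / N) ω) N
    push_cast at h
    rwa [div_self hN'.ne', zero_div] at h
  calc _ ≤ (2 * c * B / N) ^ 2 * ∫ ω, (∑ k ∈ Finset.range N,
          (X (((k : ℝ) + 1) / N) ω - X ((k : ℝ) / N) ω)) ^ 2 ∂P := by
        refine integral_sq_sum_mul_le (fun k hk => (hX _ (hright k hk)).sub (hX _ (hleft k hk)))
          (fun k hk j hj => (integral_sub_mul_sub_mem_Icc hK hc hX hcov (hleft k hk).1 (hstep k)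
            (hright k hk).2 (hleft j hj).1 (hstep j) (hright j hj).2).1) (fun k hk => ?_)
        have h := integral_sq_sub_integral_sq_mem_Icc hK hc hcov (hleft k hk).1 (hstep k)
          (hright k hk).2
        rwa [show ((k : ℝ) + 1) / N - k / N = 1 / N by ring, mul_one_div] at h
    _ = (2 * c * B / N) ^ 2 * ∫ ω, (X 1 ω - X 0 ω) * (X 1 ω - X 0 ω) ∂P := by
        simp_rw [htelescope, sq]
    _ ≤ (2 * c * B / N) ^ 2 * (c * B) := by
        gcongr
        simpa using (integral_sub_mul_sub_mem_Icc hK hc hX hcov le_rfl zero_le_one le_rfl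
          le_rfl zero_le_one le_rfl).2

end Covariance

theorem tendsto_rpow_div_natCast_atTop_zero {a : ℝ} (ha : a < 1) :
    Tendsto (fun N : ℕ => (N : ℝ) ^ a / N) atTop (𝓝 0) := by
  refine ((tendsto_rpow_neg_atTop (by linarith : 0 < 1 - a)).comp
    tendsto_natCast_atTop_atTop).congr' ((eventually_gt_atTop 0).mono fun N hN => ?_)
  rw [Function.comp_apply, neg_sub, Real.rpow_sub_one (Nat.cast_pos.2 hN).ne']

theorem cross_term_time_varying_tendsto_zero_L2_general
    {Ω : Type*} [MeasurableSpace Ω] (P : Measure Ω) [IsProbabilityMeasure P]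
    (H : ℝ) (hH : H ∈ Set.Ioo (1/2 : ℝ) (3/4))
    (Λ : ℝ)
    (σ : ℝ → ℝ) (hσmeas : Measurable σ)
    (hσbd : ∀ t ∈ Set.Icc (0:ℝ) 1, 0 ≤ σ t ∧ σ t ≤ Λ)
    (G : ℝ → Ω → ℝ)
    (hGauss : ∀ (n : ℕ) (a : Fin n → ℝ) (t : Fin n → ℝ),
      (∀ i, t i ∈ Set.Icc (0:ℝ) 1) →
      ∃ v : ℝ≥0, P.map (fun ω => ∑ i, a i * G (t i) ω) = gaussianReal 0 v)
    (hGCov : ∀ s t : ℝ, s ∈ Set.Icc (0:ℝ) 1 → t ∈ Set.Icc (0:ℝ) 1 →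
      ∫ ω, G s ω * G t ω ∂P = H * (2*H - 1) *
        ∫ u in (0:ℝ)..s, ∫ v in (0:ℝ)..t, σ u * σ v * |u - v| ^ (2*H - 2))
    -- increments η_k and variance increments δ_k
    (η : ℕ → ℕ → Ω → ℝ)
    (hη : ∀ (N k : ℕ) (ω : Ω), η N k ω = G (((k : ℝ) + 1)/N) ω - G ((k : ℝ)/N) ω)
    (δ : ℕ → ℕ → ℝ)
    (hδ : ∀ N k : ℕ, δ N k =
      (∫ ω, (G (((k : ℝ) + 1)/N) ω)^2 ∂P) - ∫ ω, (G ((k : ℝ)/N) ω)^2 ∂P) :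
    Tendsto (fun N : ℕ =>
        ∫ ω, ((N : ℝ) ^ (2*H - 1/2) * ∑ k ∈ Finset.range N, η N k ω * δ N k)^2 ∂P)
      atTop (𝓝 0) := by
  obtain ⟨hH1, hH2⟩ := hH
  set c := H * (2 * H - 1)
  set B := Λ ^ 2 * (2 / (2 * H - 2 + 1))
  have hc : 0 ≤ c := mul_nonneg (by linarith) (by linarith)
  have hK := rowBoundedKernel_mul_abs_sub_rpow hσmeas hσbd (r := 2 * H - 2) (by linarith)
  have hG : ∀ t ∈ Icc (0:ℝ) 1, MemLp (G t) 2 P := fun t ht => by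
    obtain ⟨v, hv⟩ := hGauss 1 (fun _ => 1) (fun _ => t) (fun _ => ht)
    exact memLp_of_map_eq_gaussianReal (by simpa using hv) 2 ENNReal.ofNat_ne_top
  have hbound : ∀ N : ℕ, 0 < N →
      ∫ ω, ((N : ℝ) ^ (2*H - 1/2) * ∑ k ∈ Finset.range N, η N k ω * δ N k)^2 ∂P
        ≤ ((N : ℝ) ^ (2*H - 1/2) / N * (2 * c * B)) ^ 2 * (c * B) := fun N hN => by
    simp_rw [hη, hδ, mul_pow, integral_const_mul]
    calc _ ≤ ((N : ℝ) ^ (2*H - 1/2)) ^ 2 * ((2 * c * B / N) ^ 2 * (c * B)) :=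
          by gcongr; exact integral_sq_sum_increment_mul_le hK hc hG hGCov hN
      _ = _ := by ring
  refine squeeze_zero' (Eventually.of_forall fun N => integral_nonneg fun ω => sq_nonneg _)
    ((eventually_gt_atTop 0).mono hbound) ?_
  simpa using (((tendsto_rpow_div_natCast_atTop_zero (a := 2*H - 1/2) (by linarith)).mul_const
    (2 * c * B)).pow 2).mul_const (c * B)

/-- The cross term G_N = N^{2H−1/2} Σ_k η_k δ_k for the
time-varying volatility model converges to 0 in L²(P). -/
theorem cross_term_time_varying_tendsto_zero_L2
    {Ω : Type*} [MeasurableSpace Ω] (P : Measure Ω) [IsProbabilityMeasure P]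
    (H : ℝ) (hH : H ∈ Set.Ioo (1/2 : ℝ) (3/4))
    (Λ : ℝ) (hΛ : 0 < Λ)
    (σ : ℝ → ℝ) (hσmeas : Measurable σ)
    (hσbd : ∀ t ∈ Set.Icc (0:ℝ) 1, 0 ≤ σ t ∧ σ t ≤ Λ)
    (G : ℝ → Ω → ℝ)
    (hGauss : ∀ (n : ℕ) (a : Fin n → ℝ) (t : Fin n → ℝ),
      (∀ i, t i ∈ Set.Icc (0:ℝ) 1) →
      ∃ v : ℝ≥0, P.map (fun ω => ∑ i, a i * G (t i) ω) = gaussianReal 0 v)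
    (hGCov : ∀ s t : ℝ, s ∈ Set.Icc (0:ℝ) 1 → t ∈ Set.Icc (0:ℝ) 1 →
      ∫ ω, G s ω * G t ω ∂P = H * (2*H - 1) *
        ∫ u in (0:ℝ)..s, ∫ v in (0:ℝ)..t, σ u * σ v * |u - v| ^ (2*H - 2))
    -- increments η_k and variance increments δ_k
    (η : ℕ → ℕ → Ω → ℝ)
    (hη : ∀ (N k : ℕ) (ω : Ω), η N k ω = G (((k : ℝ) + 1)/N) ω - G ((k : ℝ)/N) ω)
    (δ : ℕ → ℕ → ℝ)
    (hδ : ∀ N k : ℕ, δ N k =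
      (∫ ω, (G (((k : ℝ) + 1)/N) ω)^2 ∂P) - ∫ ω, (G ((k : ℝ)/N) ω)^2 ∂P) :
    Tendsto (fun N : ℕ =>
        ∫ ω, ((N : ℝ) ^ (2*H - 1/2) * ∑ k ∈ Finset.range N, η N k ω * δ N k)^2 ∂P)
      atTop (𝓝 0) :=
  cross_term_time_varying_tendsto_zero_L2_general P H hH Λ σ hσmeas hσbd G hGauss hGCov η hη δ hδ
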